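/- Let P be a finite nonempty poset and let F be a P-saturated family of subsets of [n] that contains every subset of [n] of size at most h*(P) − 1. Then F does not shatter any subset of [n] of size w*(P); in particular the VC-dimension of F is strictly less than w*(P). -/

import Mathlib

/-- A family `F` of subsets of `[n]` contains an induced copy of the poset `P`
if there is an injective map `f` from `P` into `F` such that
`p ≤ q` in `P` iff `f p ⊆ f q`. -/
def HasCopy (P : Type*) [PartialOrder P] {n : ℕ} (F : Finset (Finset (Fin n))) : Prop :=
  ∃ f : P → Finset (Fin n), Function.Injective f ∧ (∀ p, f p ∈ F) ∧
    ∀ p q, p ≤ q ↔ f p ⊆ f q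

/-- `F` is `P`-saturated: it contains no induced copy of `P`, but adding any
other subset of `[n]` creates an induced copy of `P`. -/
def IsSat (P : Type*) [PartialOrder P] {n : ℕ} (F : Finset (Finset (Fin n))) : Prop :=
  ¬ HasCopy P F ∧ ∀ S : Finset (Fin n), S ∉ F → HasCopy P (insert S F)

/-- The first `h + 1` layers of the cube `Q_n` (i.e. the subsets of `[n]` of
size at most `h`, ordered by inclusion) contain an induced copy of `P`. -/
def EmbedsLow (P : Type*) [PartialOrder P] (n h : ℕ) : Prop :=
  ∃ f : P → Finset (Fin n), Function.Injective f ∧ (∀ p, (f p).card ≤ h) ∧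
    ∀ p q, p ≤ q ↔ f p ⊆ f q

/-- The cube-height `h*(P)`: the least `h` such that for some `n` the subsets
of `[n]` of size at most `h` contain an induced copy of `P`. -/
noncomputable def cubeHeight (P : Type*) [PartialOrder P] : ℕ :=
  sInf {h | ∃ n, EmbedsLow P n h}

/-- The cube-width `w*(P)`: the least `w` such that the subsets of `[w]` of
size at most `h*(P)` contain an induced copy of `P`. -/
noncomputable def cubeWidth (P : Type*) [PartialOrder P] : ℕ :=
  sInf {w | EmbedsLow P w (cubeHeight P)}

/-- `F` shatters `S` if every subset of `S` arises as `A ∩ S` for some `A ∈ F`. -/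
def ShattersF {n : ℕ} (F : Finset (Finset (Fin n))) (S : Finset (Fin n)) : Prop :=
  ∀ T ⊆ S, ∃ A ∈ F, A ∩ S = T

/-!
Let `S` be shattered by `F` with `|S| ≥ w*(P)`. Then `P` embeds into the subsets of `S` of size at
most `h*(P)`, say as `p ↦ T p`. Replace each `T p` by a member `A p` of `F`: by `T p` itself when
`|T p| < h*(P)` (such sets lie in `F`), and otherwise by a set with `A p ∩ S = T p`, which exists
by shattering. Intersecting with `S` recovers `T`, so `A` reflects the order; it also preserves it,
since a `T p` of size `h*(P)` lies below no other `T q`. Hence `F` contains a copy of `P`, which a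
`P`-saturated family does not.
-/

open Finset

section

variable {P : Type*} [PartialOrder P]

lemma EmbedsLow.exists_orderEmbedding {m h : ℕ} (hP : EmbedsLow P m h) :
    ∃ g : P ↪o Finset (Fin m), ∀ p, (g p).card ≤ h :=
  let ⟨f, _, hcard, hle⟩ := hP
  ⟨OrderEmbedding.ofMapLEIff f fun p q => (hle p q).symm, hcard⟩

lemma hasCopy_of_orderEmbedding {n : ℕ} {F : Finset (Finset (Fin n))} (f : P ↪o Finset (Fin n))
    (hf : ∀ p, f p ∈ F) : HasCopy P F :=
  ⟨f, f.injective, hf, fun _ _ => f.le_iff_le.symm⟩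

lemma embedsLow_card [Fintype P] : EmbedsLow P (Fintype.card P) (Fintype.card P) := by
  classical
  let downSet : P ↪o Finset P := OrderEmbedding.ofMapLEIff (fun p => univ.filter (· ≤ p))
    fun p q => ⟨fun h => by simpa using h (mem_filter.2 ⟨mem_univ p, le_rfl⟩),
      fun hpq r hr => mem_filter.2 ⟨mem_univ r, (mem_filter.1 hr).2.trans hpq⟩⟩
  let g : P ↪o Finset (Fin (Fintype.card P)) :=
    downSet.trans (mapEmbedding (Fintype.equivFin P).toEmbedding)
  refine ⟨g, g.injective, fun p => ?_, fun _ _ => g.le_iff_le.symm⟩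
  simpa [g, downSet, card_map] using card_filter_le univ (· ≤ p)

lemma exists_embedsLow_cubeHeight [Fintype P] : ∃ n, EmbedsLow P n (cubeHeight P) :=
  Nat.sInf_mem (s := {h | ∃ n, EmbedsLow P n h}) ⟨_, _, embedsLow_card⟩

lemma embedsLow_cubeWidth [Fintype P] : EmbedsLow P (cubeWidth P) (cubeHeight P) :=
  Nat.sInf_mem exists_embedsLow_cubeHeight

lemma hasCopy_of_shattersF {n h : ℕ} {F : Finset (Finset (Fin n))} {S : Finset (Fin n)}
    (hS : ShattersF F S) (hlow : ∀ A : Finset (Fin n), A.card < h → A ∈ F)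
    (T : P ↪o Finset (Fin n)) (hTS : ∀ p, T p ⊆ S) (hTh : ∀ p, (T p).card ≤ h) :
    HasCopy P F := by
  classical
  choose B hBF hBS using fun p => hS (T p) (hTS p)
  let A : P → Finset (Fin n) := fun p => if (T p).card < h then T p else B p
  have hA_inter : ∀ p, A p ∩ S = T p := fun p => by
    by_cases hp : (T p).card < h
    · simpa [A, hp] using hTS p
    · simpa [A, hp] using hBS p
  have hA_mem : ∀ p, A p ∈ F := fun p => by
    by_cases hp : (T p).card < h
    · simpa [A, hp] using hlow _ hp
    · simpa [A, hp] using hBF p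
  have hA_mono : ∀ p q, p ≤ q → A p ⊆ A q := fun p q hpq => by
    have hTpq : T p ⊆ T q := T.le_iff_le.2 hpq
    by_cases hp : (T p).card < h
    · calc A p = T p := by simp [A, hp]
        _ ⊆ T q := hTpq
        _ = A q ∩ S := (hA_inter q).symm
        _ ⊆ A q := inter_subset_left
    · have : T p = T q := eq_of_subset_of_card_le hTpq (by have := hTh q; omega)
      rw [T.injective this]
  have hA_reflect : ∀ p q, A p ⊆ A q → p ≤ q := fun p q hA => by
    rw [← T.le_iff_le, ← hA_inter p, ← hA_inter q]
    exact inter_subset_inter_right hA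
  exact hasCopy_of_orderEmbedding
    (OrderEmbedding.ofMapLEIff A fun p q => ⟨hA_reflect p q, hA_mono p q⟩) hA_mem

lemma not_shattersF_of_cubeWidth_le [Fintype P] {n : ℕ} {F : Finset (Finset (Fin n))}
    (hF : ¬ HasCopy P F) (hlow : ∀ A : Finset (Fin n), A.card < cubeHeight P → A ∈ F)
    {S : Finset (Fin n)} (hS : cubeWidth P ≤ S.card) : ¬ ShattersF F S := fun hsh => by
  obtain ⟨g, hg⟩ := embedsLow_cubeWidth.exists_orderEmbedding (P := P)
  let e : Fin (cubeWidth P) ↪ Fin n := (Fin.castLEEmb hS).trans (S.orderEmbOfFin rfl).toEmbedding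
  refine hF (hasCopy_of_shattersF hsh hlow (g.trans (mapEmbedding e)) (fun p x hx => ?_)
    fun p => by simpa using hg p)
  obtain ⟨i, -, rfl⟩ := mem_map.1 hx
  exact orderEmbOfFin_mem S rfl _

end

theorem saturated_vc_dimension_lt_cubeWidth_general (P : Type*) [PartialOrder P] [Fintype P]
    (n : ℕ) (F : Finset (Finset (Fin n))) (hsat : IsSat P F)
    (hlow : ∀ A : Finset (Fin n), A.card < cubeHeight P → A ∈ F) :
    (∀ S : Finset (Fin n), S.card = cubeWidth P → ¬ ShattersF F S) ∧
      (∀ S : Finset (Fin n), ShattersF F S → S.card < cubeWidth P) :=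
  ⟨fun _ hS => not_shattersF_of_cubeWidth_le hsat.1 hlow hS.ge,
    fun _ hsh => lt_of_not_ge fun hS => not_shattersF_of_cubeWidth_le hsat.1 hlow hS hsh⟩

/-- If `F` is a `P`-saturated family of subsets of `[n]` containing every
subset of size at most `h*(P) − 1`, then `F` shatters no set of size `w*(P)`;
in particular the VC-dimension of `F` is strictly less than `w*(P)`. -/
theorem saturated_vc_dimension_lt_cubeWidth (P : Type*) [PartialOrder P] [Fintype P] [Nonempty P]
    (n : ℕ) (F : Finset (Finset (Fin n))) (hsat : IsSat P F)
    (hlow : ∀ A : Finset (Fin n), A.card < cubeHeight P → A ∈ F) :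
    (∀ S : Finset (Fin n), S.card = cubeWidth P → ¬ ShattersF F S) ∧
      (∀ S : Finset (Fin n), ShattersF F S → S.card < cubeWidth P) :=
  saturated_vc_dimension_lt_cubeWidth_general P n F hsat hlow
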